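/- arXiv:1412.1230 — 5 statements merged into one kernel-verified Lean document; each statement's English description precedes it below -/
import Mathlib

section
/- Let 0 < M ≤ Id be a real symmetric 3×3 matrix with at least two eigenvalues strictly less than 1, and let V(x) = 1/|x| − 1/(√(det(M^{-1}))·|M^{1/2}x|) for x ≠ 0. Then there exist constants a, b with 0 ≤ b < a ≤ 1 such that b/|x| ≤ V(x) ≤ a/|x| for all x ≠ 0. If moreover M < Id (all eigenvalues strictly less than 1), one may take b > 0. -/
/-!
Writing `λ₀` for the smallest eigenvalue of `M`, one has `‖M^{1/2} x‖² = ⟪x, M x⟫ ≥ λ₀ ‖x‖²`, and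
`√det(M⁻¹) = 1 / √det M`, so the subtracted term is at most `√(det M / λ₀) / ‖x‖`. The quotient
`det M / λ₀` is the product of the other two eigenvalues, which lie in `(0, 1]` and at least one of
which is `< 1`. Hence `a = 1` and `b = 1 - √(det M / λ₀) > 0` work.
-/

open Matrix

section

open scoped ComplexOrder

/-- The square root of a positive semidefinite matrix, as `Matrix.PosSemidef.sqrt` was defined
in Mathlib of December 2024 (since removed in favour of `CFC.sqrt`). -/
noncomputable def Matrix.PosSemidef.sqrtOld {n 𝕜 : Type*} [Fintype n] [DecidableEq n] [RCLike 𝕜]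
    {A : Matrix n n 𝕜} (hA : A.PosSemidef) : Matrix n n 𝕜 :=
  (hA.1.eigenvectorUnitary : Matrix n n 𝕜) * diagonal (((↑) : ℝ → 𝕜) ∘ (√·) ∘ hA.1.eigenvalues) *
    (star hA.1.eigenvectorUnitary : Matrix n n 𝕜)

end

open scoped MatrixOrder ComplexOrder

namespace Matrix

variable {n 𝕜 : Type*} [Fintype n] [DecidableEq n] [RCLike 𝕜]

theorem PosSemidef.sqrtOld_eq_sqrt {A : Matrix n n 𝕜} (hA : A.PosSemidef) :
    hA.sqrtOld = CFC.sqrt A := by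
  rw [CFC.sqrt_eq_real_sqrt A hA.nonneg, cfcₙ_eq_cfc, hA.1.cfc_eq]
  rfl

theorem IsHermitian.eigenvalues_le_one {A : Matrix n n 𝕜} (hA : A.IsHermitian)
    (h : (1 - A).PosSemidef) (i : n) : hA.eigenvalues i ≤ 1 :=
  (CFC.le_one_iff A hA.isSelfAdjoint).1 h _ (hA.eigenvalues_mem_spectrum_real i)

theorem IsHermitian.algebraMap_le_of_forall_le_eigenvalues {A : Matrix n n 𝕜}
    (hA : A.IsHermitian) {μ : ℝ} (h : ∀ i, μ ≤ hA.eigenvalues i) : algebraMap ℝ _ μ ≤ A := by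
  rw [algebraMap_le_iff_le_spectrum (ha := hA.isSelfAdjoint),
    hA.spectrum_real_eq_range_eigenvalues]
  rintro _ ⟨i, rfl⟩
  exact h i

open scoped RealInnerProductSpace

theorem norm_toEuclideanCLM_sqrt_sq {A : Matrix n n ℝ} (hA : 0 ≤ A) (x : EuclideanSpace ℝ n) :
    ‖toEuclideanCLM (𝕜 := ℝ) (CFC.sqrt A) x‖ ^ 2 = ⟪x, toEuclideanCLM (𝕜 := ℝ) A x⟫ := by
  rw [← real_inner_self_eq_norm_sq, ← ContinuousLinearMap.adjoint_inner_right,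
    ← ContinuousLinearMap.comp_apply, ← ContinuousLinearMap.star_eq_adjoint, ← map_star,
    ← ContinuousLinearMap.mul_def, ← map_mul, (CFC.sqrt_nonneg A).isSelfAdjoint.star_eq,
    CFC.sqrt_mul_sqrt_self A hA]

theorem mul_norm_sq_le_inner_toEuclideanCLM {A : Matrix n n ℝ} {μ : ℝ}
    (h : algebraMap ℝ _ μ ≤ A) (x : EuclideanSpace ℝ n) :
    μ * ‖x‖ ^ 2 ≤ ⟪x, toEuclideanCLM (𝕜 := ℝ) A x⟫ := by
  have hx : WithLp.ofLp x ⬝ᵥ WithLp.ofLp x = ‖x‖ ^ 2 := by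
    rw [← real_inner_self_eq_norm_sq, EuclideanSpace.inner_eq_star_dotProduct, star_trivial]
  have h := h.dotProduct_mulVec_nonneg (WithLp.ofLp x)
  rw [star_trivial, sub_mulVec, dotProduct_sub, Algebra.algebraMap_eq_smul_one, smul_mulVec,
    one_mulVec, dotProduct_smul, smul_eq_mul, hx, ← inner_toEuclideanCLM] at h
  exact sub_nonneg.mp h

theorem sqrt_mul_norm_le_norm_toEuclideanCLM_sqrt {A : Matrix n n ℝ} {μ : ℝ} (hA : 0 ≤ A)
    (h : algebraMap ℝ _ μ ≤ A) (x : EuclideanSpace ℝ n) :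
    √μ * ‖x‖ ≤ ‖toEuclideanCLM (𝕜 := ℝ) (CFC.sqrt A) x‖ := by
  rw [← Real.sqrt_sq (norm_nonneg x), ← Real.sqrt_mul' _ (sq_nonneg _),
    ← Real.sqrt_sq (norm_nonneg (toEuclideanCLM (𝕜 := ℝ) (CFC.sqrt A) x)),
    norm_toEuclideanCLM_sqrt_sq hA]
  exact Real.sqrt_le_sqrt (mul_norm_sq_le_inner_toEuclideanCLM h x)

end Matrix

theorem Finset.prod_lt_one_of_mem {ι R : Type*} [CommSemiring R] [PartialOrder R]
    [IsStrictOrderedRing R] {s : Finset ι} {f : ι → R} (h0 : ∀ i ∈ s, 0 ≤ f i)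
    (h1 : ∀ i ∈ s, f i ≤ 1) {j : ι} (hj : j ∈ s) (hfj : f j < 1) : ∏ i ∈ s, f i < 1 := by
  classical
  rw [← Finset.mul_prod_erase s f hj]
  calc f j * ∏ i ∈ s.erase j, f i ≤ f j * 1 := by
        gcongr
        · exact h0 j hj
        · exact Finset.prod_le_one (fun i hi ↦ h0 i (Finset.mem_of_mem_erase hi))
            (fun i hi ↦ h1 i (Finset.mem_of_mem_erase hi))
    _ < 1 := by rwa [mul_one]

theorem Matrix.PosDef.det_lt_eigenvalues {n : Type*} [Fintype n] [DecidableEq n]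
    {A : Matrix n n ℝ} (hA : A.PosDef) (h1 : (1 - A).PosSemidef)
    (htwo : ∃ i j, i ≠ j ∧ hA.1.eigenvalues i < 1 ∧ hA.1.eigenvalues j < 1) (k : n) :
    A.det < hA.1.eigenvalues k := by
  obtain ⟨i, j, hij, hi, hj⟩ := htwo
  obtain ⟨l, hlk, hl⟩ : ∃ l, l ≠ k ∧ hA.1.eigenvalues l < 1 := by
    by_cases hik : i = k
    · exact ⟨j, hik ▸ hij.symm, hj⟩
    · exact ⟨i, hik, hi⟩
  have hrest : ∏ i ∈ Finset.univ.erase k, hA.1.eigenvalues i < 1 :=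
    Finset.prod_lt_one_of_mem (fun i _ ↦ (hA.eigenvalues_pos i).le)
      (fun i _ ↦ hA.1.eigenvalues_le_one h1 i) (Finset.mem_erase.2 ⟨hlk, Finset.mem_univ l⟩) hl
  rw [hA.1.det_eq_prod_eigenvalues, ← Finset.mul_prod_erase _ _ (Finset.mem_univ k)]
  exact mul_lt_of_lt_one_right (hA.eigenvalues_pos k) (by simpa using hrest)

theorem one_div_sub_div_mem_Icc {r s m d : ℝ} (hr : 0 < r) (hm : 0 < m) (hd : 0 ≤ d)
    (hs : m * r ≤ s) : 1 / r - d / s ∈ Set.Icc ((1 - d / m) / r) (1 / r) := by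
  have hs0 : 0 < s := (mul_pos hm hr).trans_le hs
  constructor
  · rw [sub_div, div_div]
    gcongr
  · exact sub_le_self _ (div_nonneg hd hs0.le)

theorem anisotropic_potential_coulomb_bounds (M : Matrix (Fin 3) (Fin 3) ℝ)
    (hM : M.PosDef)
    (hM1 : ((1 : Matrix (Fin 3) (Fin 3) ℝ) - M).PosSemidef)
    (htwo : ∃ i j : Fin 3, i ≠ j ∧ hM.1.eigenvalues i < 1 ∧ hM.1.eigenvalues j < 1)
    (V : EuclideanSpace ℝ (Fin 3) → ℝ)
    (hV : ∀ x, x ≠ 0 → V x = 1 / ‖x‖ -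
      1 / (Real.sqrt (M⁻¹).det * ‖(Matrix.toEuclideanCLM (𝕜 := ℝ) hM.posSemidef.sqrtOld) x‖)) :
    (∃ a b : ℝ, 0 ≤ b ∧ b < a ∧ a ≤ 1 ∧
      ∀ x, x ≠ 0 → b / ‖x‖ ≤ V x ∧ V x ≤ a / ‖x‖) ∧
    (((1 : Matrix (Fin 3) (Fin 3) ℝ) - M).PosDef →
      ∃ a b : ℝ, 0 < b ∧ b < a ∧ a ≤ 1 ∧
        ∀ x, x ≠ 0 → b / ‖x‖ ≤ V x ∧ V x ≤ a / ‖x‖) := by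
  obtain ⟨k, hk⟩ := Finite.exists_min hM.1.eigenvalues
  set μ := hM.1.eigenvalues k
  have hμ : 0 < √μ := Real.sqrt_pos.2 (hM.eigenvalues_pos k)
  have hc : 0 < √M.det / √μ := div_pos (Real.sqrt_pos.2 hM.det_pos) hμ
  have hb : 0 < 1 - √M.det / √μ := by
    rw [sub_pos, div_lt_one hμ]
    exact Real.sqrt_lt_sqrt hM.det_pos.le (hM.det_lt_eigenvalues hM1 htwo k)
  have hbounds (x : EuclideanSpace ℝ (Fin 3)) (hx : x ≠ 0) :
      (1 - √M.det / √μ) / ‖x‖ ≤ V x ∧ V x ≤ 1 / ‖x‖ := by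
    rw [hV x hx, det_nonsing_inv, Ring.inverse_eq_inv', Real.sqrt_inv, inv_mul_eq_div,
      one_div_div, hM.posSemidef.sqrtOld_eq_sqrt]
    exact one_div_sub_div_mem_Icc (norm_pos_iff.2 hx) hμ (Real.sqrt_nonneg _)
      (sqrt_mul_norm_le_norm_toEuclideanCLM_sqrt hM.posSemidef.nonneg
        (hM.1.algebraMap_le_of_forall_le_eigenvalues hk) x)
  exact ⟨⟨1, _, hb.le, sub_lt_self 1 hc, le_rfl, hbounds⟩,
    fun _ ↦ ⟨1, _, hb, sub_lt_self 1 hc, le_rfl, hbounds⟩⟩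
end

section
/- Let M = diag(m₁, m₂, m₃) with 0 < m₃ ≤ m₂ ≤ m₁ < 1 and V(x) = 1/|x| − 1/|M^{-1}x|. For k ∈ {1,2,3} and x with x_k ≠ 0, the partial derivative of V with respect to |x_k| is ∂_{|x_k|}V(x) = m_k^{-2}|x_k|/(m₁^{-2}x₁² + m₂^{-2}x₂² + m₃^{-2}x₃²)^{3/2} − |x_k|/|x|³, and this is ≤ 0 for almost every x ∈ ℝ³ if and only if m₁³ ≤ m_k². -/
/-!
Differentiating `1 / |M⁻¹ x|` in `x_k` gives `-m_k⁻² x_k / |M⁻¹ x|³`, whence the formula for the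
partial derivative. Writing `D_k x = |x_k| W x`, the sign of `D_k` is that of `W`, which is
continuous away from the origin; since `x_k ≠ 0` off a null hyperplane, `D_k ≤ 0` a.e. forces
`W ≤ 0` at every point of continuity. At the basis vector `e_j` one has `W e_j = m_j³ / m_k² - 1`,
which gives necessity with `j = 0`. Conversely `|M⁻¹ x| ≥ |x| / m₀`, so that
`m_k⁻² |x|³ ≤ m₀⁻³ |x|³ ≤ |M⁻¹ x|³` as soon as `m₀³ ≤ m_k²`.
-/

open MeasureTheory Filter Topology

theorem HasDerivAt.one_div_sqrt {f : ℝ → ℝ} {f' a : ℝ} (hf : HasDerivAt f f' a) (ha : 0 < f a) :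
    HasDerivAt (fun s => 1 / Real.sqrt (f s)) (-(f' / (2 * Real.sqrt (f a) ^ 3))) a := by
  simp only [one_div]
  exact ((hf.sqrt ha.ne').inv (Real.sqrt_pos.2 ha).ne').congr_deriv (by ring)

theorem ContinuousAt.nonpos_of_ae_nonpos {X : Type*} [TopologicalSpace X] [MeasurableSpace X]
    (μ : Measure X) [μ.IsOpenPosMeasure] {f : X → ℝ} {p : X} (hf : ContinuousAt f p)
    (h : ∀ᵐ x ∂μ, f x ≤ 0) : f p ≤ 0 := by
  by_contra! hp
  have hpos : {x | 0 < f x} ∈ 𝓝 p := hf.eventually (lt_mem_nhds hp)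
  refine (Measure.measure_pos_of_mem_nhds μ hpos).ne' ?_
  simpa using ae_iff.1 h

section WeightedSum

variable {ι : Type*} [Fintype ι]

theorem hasDerivAt_sum_div_sq_update [DecidableEq ι] (w x : ι → ℝ) (k : ι) :
    HasDerivAt (fun s => ∑ i, (Function.update x k s i / w i) ^ 2)
      (2 * (w k)⁻¹ ^ 2 * x k) (x k) := by
  have hcoord (i : ι) :
      HasDerivAt (fun s => Function.update x k s i) ((Pi.single k 1 : ι → ℝ) i) (x k) :=
    hasDerivAt_pi.1 (hasDerivAt_update x k (x k)) i
  refine (HasDerivAt.fun_sum (u := Finset.univ)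
    fun i _ => ((hcoord i).div_const (w i)).pow 2).congr_deriv ?_
  rw [Finset.sum_eq_single k (fun i _ hi => by simp [hi]) (by simp)]
  simp only [Function.update_self, Pi.single_eq_same]
  ring

theorem hasDerivAt_one_div_sqrt_sum_div_sq_update [DecidableEq ι] (w x : ι → ℝ) (k : ι)
    (hx : 0 < ∑ i, (x i / w i) ^ 2) :
    HasDerivAt (fun s => 1 / Real.sqrt (∑ i, (Function.update x k s i / w i) ^ 2))
      (-((w k)⁻¹ ^ 2 * x k / Real.sqrt (∑ i, (x i / w i) ^ 2) ^ 3)) (x k) := by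
  have h := (hasDerivAt_sum_div_sq_update w x k).one_div_sqrt
  simp only [Function.update_eq_self] at h
  convert h hx using 2
  ring

theorem sum_div_sq_pos {w x : ι → ℝ} {k : ι} (hw : w k ≠ 0) (hx : x k ≠ 0) :
    0 < ∑ i, (x i / w i) ^ 2 :=
  Finset.sum_pos' (fun i _ => sq_nonneg _) ⟨k, Finset.mem_univ k, by positivity⟩

theorem inv_sq_mul_sum_sq_le_sum_div_sq {w x : ι → ℝ} {c : ℝ} (hw : ∀ i, 0 < w i)
    (hc : ∀ i, w i ≤ c) : c⁻¹ ^ 2 * ∑ i, x i ^ 2 ≤ ∑ i, (x i / w i) ^ 2 := by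
  rw [Finset.mul_sum]
  refine Finset.sum_le_sum fun i _ => ?_
  have hc0 : 0 < c := (hw i).trans_le (hc i)
  rw [div_pow, div_eq_inv_mul, ← inv_pow]
  gcongr
  exacts [hw i, hc i]

end WeightedSum

section PartialDeriv

variable {ι : Type*} [Fintype ι]

noncomputable def anisotropicPartialDeriv (w : ι → ℝ) (k : ι) (x : ι → ℝ) : ℝ :=
  (w k)⁻¹ ^ 2 * |x k| / Real.sqrt (∑ i, (x i / w i) ^ 2) ^ 3
    - |x k| / Real.sqrt (∑ i, x i ^ 2) ^ 3

theorem anisotropicPartialDeriv_eq_abs_mul (w : ι → ℝ) (k : ι) (x : ι → ℝ) :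
    anisotropicPartialDeriv w k x = |x k| *
      ((w k)⁻¹ ^ 2 / Real.sqrt (∑ i, (x i / w i) ^ 2) ^ 3 - 1 / Real.sqrt (∑ i, x i ^ 2) ^ 3) := by
  rw [anisotropicPartialDeriv]
  ring

theorem anisotropicPartialDeriv_nonpos {w : ι → ℝ} {c : ℝ} {k : ι} (hw : ∀ i, 0 < w i)
    (hc : ∀ i, w i ≤ c) (hck : c ^ 3 ≤ w k ^ 2) (x : ι → ℝ) :
    anisotropicPartialDeriv w k x ≤ 0 := by
  rcases eq_or_ne (x k) 0 with hxk | hxk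
  · simp [anisotropicPartialDeriv, hxk]
  have hR : 0 < Real.sqrt (∑ i, x i ^ 2) :=
    Real.sqrt_pos.2 (by simpa using sum_div_sq_pos (w := 1) one_ne_zero hxk)
  have hc0 : 0 < c := (hw k).trans_le (hc k)
  have hnorm : c⁻¹ * Real.sqrt (∑ i, x i ^ 2) ≤ Real.sqrt (∑ i, (x i / w i) ^ 2) :=
    calc c⁻¹ * Real.sqrt (∑ i, x i ^ 2) = Real.sqrt (c⁻¹ ^ 2 * ∑ i, x i ^ 2) := by
          rw [Real.sqrt_mul (by positivity), Real.sqrt_sq (by positivity)]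
      _ ≤ Real.sqrt (∑ i, (x i / w i) ^ 2) :=
          Real.sqrt_le_sqrt (inv_sq_mul_sum_sq_le_sum_div_sq hw hc)
  have hcube :
      (w k)⁻¹ ^ 2 * Real.sqrt (∑ i, x i ^ 2) ^ 3 ≤ Real.sqrt (∑ i, (x i / w i) ^ 2) ^ 3 :=
    calc (w k)⁻¹ ^ 2 * Real.sqrt (∑ i, x i ^ 2) ^ 3
        ≤ c⁻¹ ^ 3 * Real.sqrt (∑ i, x i ^ 2) ^ 3 := by
          rw [inv_pow, inv_pow]
          gcongr
      _ = (c⁻¹ * Real.sqrt (∑ i, x i ^ 2)) ^ 3 := by ring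
      _ ≤ Real.sqrt (∑ i, (x i / w i) ^ 2) ^ 3 := by gcongr
  rw [anisotropicPartialDeriv, sub_nonpos, mul_comm, mul_div_assoc]
  calc |x k| * ((w k)⁻¹ ^ 2 / Real.sqrt (∑ i, (x i / w i) ^ 2) ^ 3)
      ≤ |x k| * ((w k)⁻¹ ^ 2 / ((w k)⁻¹ ^ 2 * Real.sqrt (∑ i, x i ^ 2) ^ 3)) := by
        have := hw k
        gcongr
    _ = |x k| / Real.sqrt (∑ i, x i ^ 2) ^ 3 := by
        have := (hw k).ne'
        field_simp

theorem pow_three_le_sq_of_ae_anisotropicPartialDeriv_nonpos [DecidableEq ι] {w : ι → ℝ}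
    {j k : ι} (hj : 0 < w j) (hk : w k ≠ 0)
    (h : ∀ᵐ x ∂(volume : Measure (ι → ℝ)), anisotropicPartialDeriv w k x ≤ 0) :
    w j ^ 3 ≤ w k ^ 2 := by
  set W : (ι → ℝ) → ℝ := fun x =>
    (w k)⁻¹ ^ 2 / Real.sqrt (∑ i, (x i / w i) ^ 2) ^ 3 - 1 / Real.sqrt (∑ i, x i ^ 2) ^ 3
  have hW : ∀ᵐ x ∂(volume : Measure (ι → ℝ)), W x ≤ 0 := by
    filter_upwards [h, Measure.ae_eval_ne _ k 0] with x hx hxk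
    rw [anisotropicPartialDeriv_eq_abs_mul] at hx
    exact nonpos_of_mul_nonpos_right hx (abs_pos.2 hxk)
  have hQ : Real.sqrt (∑ i, ((Pi.single j 1 : ι → ℝ) i / w i) ^ 2) = (w j)⁻¹ := by
    rw [Finset.sum_eq_single j (fun i _ hi => by simp [hi]) (by simp)]
    simp [hj.le]
  have hR : Real.sqrt (∑ i, ((Pi.single j 1 : ι → ℝ) i) ^ 2) = 1 := by
    rw [Finset.sum_eq_single j (fun i _ hi => by simp [hi]) (by simp)]
    simp
  have hcont : ContinuousAt W (Pi.single j 1) := by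
    refine (continuousAt_const.div (Continuous.continuousAt (by fun_prop)) ?_).sub
      (continuousAt_const.div (Continuous.continuousAt (by fun_prop)) ?_)
    · rw [hQ]; positivity
    · rw [hR]; norm_num
  have hWj := hcont.nonpos_of_ae_nonpos volume hW
  simp only [W, hQ, hR] at hWj
  have hratio : w j ^ 3 / w k ^ 2 ≤ 1 := by
    convert sub_nonpos.1 hWj using 1 <;> field_simp
  exact (div_le_one (by positivity)).1 hratio

end PartialDeriv

theorem anisotropic_potential_deriv_sign_general (m : Fin 3 → ℝ)
    (h3 : 0 < m 2) (h32 : m 2 ≤ m 1) (h21 : m 1 ≤ m 0)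
    (V : (Fin 3 → ℝ) → ℝ)
    (hV : ∀ x, V x = 1 / Real.sqrt (∑ i, (x i) ^ 2)
        - 1 / Real.sqrt (∑ i, (x i / m i) ^ 2))
    (D : Fin 3 → (Fin 3 → ℝ) → ℝ)
    (hD : ∀ k x, D k x =
        ((m k)⁻¹) ^ 2 * |x k| / Real.sqrt (∑ i, (x i / m i) ^ 2) ^ 3
        - |x k| / Real.sqrt (∑ i, (x i) ^ 2) ^ 3) :
    ∀ k : Fin 3,
      (∀ x : Fin 3 → ℝ, 0 < x k →
        HasDerivAt (fun s => V (Function.update x k s)) (D k x) (x k)) ∧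
      ((∀ᵐ x ∂(volume : Measure (Fin 3 → ℝ)), D k x ≤ 0) ↔ (m 0) ^ 3 ≤ (m k) ^ 2) := by
  have hm : ∀ i, 0 < m i := fun i => by fin_cases i <;> dsimp <;> linarith
  have hm0 : ∀ i, m i ≤ m 0 := fun i => by fin_cases i <;> dsimp <;> linarith
  intro k
  refine ⟨fun x hx => ?_, ?_⟩
  · have hR := hasDerivAt_one_div_sqrt_sum_div_sq_update 1 x k (sum_div_sq_pos one_ne_zero hx.ne')
    have hQ := hasDerivAt_one_div_sqrt_sum_div_sq_update m x k (sum_div_sq_pos (hm k).ne' hx.ne')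
    simp only [Pi.one_apply, div_one, inv_one, one_pow, one_mul] at hR
    simp only [hV, hD, abs_of_pos hx]
    exact (hR.sub hQ).congr_deriv (by ring)
  · rw [show D = anisotropicPartialDeriv m from funext₂ hD]
    exact ⟨pow_three_le_sq_of_ae_anisotropicPartialDeriv_nonpos (hm 0) (hm k).ne',
      fun h => ae_of_all _ (anisotropicPartialDeriv_nonpos hm hm0 h)⟩

theorem anisotropic_potential_deriv_sign (m : Fin 3 → ℝ)
    (h3 : 0 < m 2) (h32 : m 2 ≤ m 1) (h21 : m 1 ≤ m 0) (h1 : m 0 < 1)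
    (V : (Fin 3 → ℝ) → ℝ)
    (hV : ∀ x, V x = 1 / Real.sqrt (∑ i, (x i) ^ 2)
        - 1 / Real.sqrt (∑ i, (x i / m i) ^ 2))
    (D : Fin 3 → (Fin 3 → ℝ) → ℝ)
    (hD : ∀ k x, D k x =
        ((m k)⁻¹) ^ 2 * |x k| / Real.sqrt (∑ i, (x i / m i) ^ 2) ^ 3
        - |x k| / Real.sqrt (∑ i, (x i) ^ 2) ^ 3) :
    ∀ k : Fin 3,
      (∀ x : Fin 3 → ℝ, 0 < x k →
        HasDerivAt (fun s => V (Function.update x k s)) (D k x) (x k)) ∧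
      ((∀ᵐ x ∂(volume : Measure (Fin 3 → ℝ)), D k x ≤ 0) ↔ (m 0) ^ 3 ≤ (m k) ^ 2) :=
  anisotropic_potential_deriv_sign_general m h3 h32 h21 V hV D hD
end

section
/- For (θ,t) ∈ ℝ × [0,1] with (θ,t) ≠ (0,1), the Fourier cosine coefficients of θ ↦ (1 − 2t cosθ + t²)^{-1/2} are all strictly positive when t ∈ (0,1): writing (1−2t cosθ+t²)^{-1/2} = Σ_{n≥0} c_n(t) cos(nθ), one has c_n(t) = Σ_{k : k ≡ n mod 2, k ≥ n} β_{n,k} t^k with β_{n,k} > 0 explicitly given by products of central binomial coefficients; in particular c_n(t) > 0 for all n ≥ 0 and t ∈ (0,1). -/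
/-!
With `a_k = C(2k, k) / 4^k`, the convolution identity `∑_{i+j=k} a_i a_j = 1` says that
`S(z) = ∑ a_k z^k` satisfies `S(z)² = (1 - z)⁻¹` on the unit disc, hence `|S(z)|² = |1 - z|⁻¹`.
For `z = t e^{iθ}` this expands `(1 - 2t cos θ + t²)^{-1/2} = S(z) S(z̄)` as
`∑_k t^k ∑_{i+j=k} a_i a_j cos((i - j)θ)`, a series dominated by `∑ |t|^k`. Integrating it term by
term against `cos(nθ)` keeps exactly the terms with `i - j = ±n`, which add up to `β_{n,k} t^k`.
-/

/-- The coefficients `β_{n,k}` (products of central binomial coefficients), nonzero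
exactly when `k ≥ n` and `k ≡ n (mod 2)`. -/
noncomputable def betaCoef (n k : ℕ) : ℝ :=
  if n ≤ k ∧ k % 2 = n % 2 then
    (if n = 0 then 1 else 2) * (Nat.choose (k + n) ((k + n) / 2)) *
      (Nat.choose (k - n) ((k - n) / 2)) / 2 ^ (2 * k)
  else 0

open Finset Finset.Nat
open scoped Real

noncomputable def invSqrtCoeff (k : ℕ) : ℝ := k.centralBinom / 4 ^ k

lemma invSqrtCoeff_pos (k : ℕ) : 0 < invSqrtCoeff k := by
  unfold invSqrtCoeff
  have := k.centralBinom_pos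
  positivity

lemma invSqrtCoeff_le_one (k : ℕ) : invSqrtCoeff k ≤ 1 := by
  rw [invSqrtCoeff, div_le_one (by positivity)]
  exact_mod_cast k.centralBinom_le_four_pow

lemma invSqrtCoeff_eq_choose (k : ℕ) : invSqrtCoeff k = (2 * k).choose k / 2 ^ (2 * k) := by
  rw [invSqrtCoeff, Nat.centralBinom_eq_two_mul_choose, pow_mul]
  norm_num

lemma succ_mul_invSqrtCoeff_succ (k : ℕ) :
    (k + 1 : ℝ) * invSqrtCoeff (k + 1) = (k + 1 / 2) * invSqrtCoeff k := by
  have h : ((k + 1) * (k + 1).centralBinom : ℝ) = 2 * (2 * k + 1) * k.centralBinom := by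
    exact_mod_cast k.succ_mul_centralBinom_succ
  simp only [invSqrtCoeff, pow_succ]
  field_simp
  linear_combination 2 * h

lemma two_mul_sum_antidiagonal_fst_mul {w : ℕ → ℕ → ℝ} (hw : ∀ i j, w i j = w j i) (n : ℕ) :
    2 * ∑ p ∈ antidiagonal n, (p.1 : ℝ) * w p.1 p.2 = n * ∑ p ∈ antidiagonal n, w p.1 p.2 := by
  have hswap : ∑ p ∈ antidiagonal n, (p.1 : ℝ) * w p.1 p.2
      = ∑ p ∈ antidiagonal n, (p.2 : ℝ) * w p.1 p.2 := by
    rw [← sum_antidiagonal_swap]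
    simp only [Prod.fst_swap, Prod.snd_swap, hw]
  rw [two_mul]
  nth_rw 2 [hswap]
  rw [← sum_add_distrib, mul_sum]
  refine sum_congr rfl fun p hp => ?_
  rw [← (mem_antidiagonal.mp hp)]
  push_cast
  ring

/-- `(i + 1) a_{i+1} = (i + 1/2) a_i` and the symmetry of the convolution `c_k` give
`(k + 1) c_{k+1} = k c_k + c_k`. -/
lemma sum_antidiagonal_invSqrtCoeff_mul (k : ℕ) :
    ∑ p ∈ antidiagonal k, invSqrtCoeff p.1 * invSqrtCoeff p.2 = 1 := by
  have hsymm : ∀ i j, invSqrtCoeff i * invSqrtCoeff j = invSqrtCoeff j * invSqrtCoeff i :=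
    fun _ _ => mul_comm _ _
  induction k with
  | zero => simp [invSqrtCoeff]
  | succ k ih =>
    have hshift : ∑ p ∈ antidiagonal (k + 1), (p.1 : ℝ) * (invSqrtCoeff p.1 * invSqrtCoeff p.2)
        = ∑ p ∈ antidiagonal k, ((p.1 : ℝ) + 1 / 2) * (invSqrtCoeff p.1 * invSqrtCoeff p.2) := by
      rw [sum_antidiagonal_succ, Nat.cast_zero, zero_mul, zero_add]
      refine sum_congr rfl fun p _ => ?_
      rw [← mul_assoc, Nat.cast_succ, succ_mul_invSqrtCoeff_succ, mul_assoc]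
    have h := two_mul_sum_antidiagonal_fst_mul hsymm (k + 1)
    rw [hshift] at h
    simp only [add_mul, sum_add_distrib, mul_add, ← mul_sum,
      two_mul_sum_antidiagonal_fst_mul hsymm k, ih] at h
    refine mul_left_cancel₀ (show (k + 1 : ℝ) ≠ 0 by positivity) ?_
    push_cast at h
    linarith

open Complex ComplexConjugate

noncomputable def invSqrtSeries (z : ℂ) : ℂ := ∑' k, (invSqrtCoeff k : ℂ) * z ^ k

lemma summable_norm_invSqrtCoeff_mul_pow {z : ℂ} (hz : ‖z‖ < 1) :
    Summable fun k => ‖(invSqrtCoeff k : ℂ) * z ^ k‖ := by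
  refine (summable_geometric_of_lt_one (norm_nonneg z) hz).of_nonneg_of_le
    (fun _ => norm_nonneg _) fun k => ?_
  rw [norm_mul, norm_pow, norm_real, Real.norm_of_nonneg (invSqrtCoeff_pos k).le]
  exact mul_le_of_le_one_left (by positivity) (invSqrtCoeff_le_one k)

lemma hasSum_invSqrtSeries_mul {z w : ℂ} (hz : ‖z‖ < 1) (hw : ‖w‖ < 1) :
    HasSum (fun k => ∑ p ∈ antidiagonal k,
      (invSqrtCoeff p.1 : ℂ) * z ^ p.1 * ((invSqrtCoeff p.2 : ℂ) * w ^ p.2))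
      (invSqrtSeries z * invSqrtSeries w) := by
  have hz' := summable_norm_invSqrtCoeff_mul_pow hz
  have hw' := summable_norm_invSqrtCoeff_mul_pow hw
  rw [invSqrtSeries, invSqrtSeries, tsum_mul_tsum_eq_tsum_sum_antidiagonal_of_summable_norm hz' hw']
  exact (summable_norm_sum_mul_antidiagonal_of_summable_norm hz' hw').of_norm.hasSum

lemma invSqrtSeries_sq {z : ℂ} (hz : ‖z‖ < 1) : invSqrtSeries z ^ 2 = (1 - z)⁻¹ := by
  have hterm : ∀ k, ∑ p ∈ antidiagonal k,
      (invSqrtCoeff p.1 : ℂ) * z ^ p.1 * ((invSqrtCoeff p.2 : ℂ) * z ^ p.2) = z ^ k := by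
    intro k
    calc _ = ∑ p ∈ antidiagonal k, ((invSqrtCoeff p.1 * invSqrtCoeff p.2 : ℝ) : ℂ) * z ^ k :=
          sum_congr rfl fun p hp => by
            rw [← mem_antidiagonal.mp hp, pow_add]
            push_cast
            ring
      _ = z ^ k := by
          rw [← sum_mul, ← ofReal_sum, sum_antidiagonal_invSqrtCoeff_mul, ofReal_one, one_mul]
  rw [sq]
  refine (hasSum_invSqrtSeries_mul hz hz).unique ?_
  simpa only [hterm] using hasSum_geometric_of_norm_lt_one hz

lemma conj_invSqrtSeries (z : ℂ) : conj (invSqrtSeries z) = invSqrtSeries (conj z) := by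
  simp [invSqrtSeries, Complex.conj_tsum]

lemma norm_invSqrtSeries_sq {z : ℂ} (hz : ‖z‖ < 1) : ‖invSqrtSeries z‖ ^ 2 = ‖1 - z‖⁻¹ := by
  refine (pow_left_inj₀ (by positivity) (by positivity) two_ne_zero).mp ?_
  rw [← pow_mul, pow_mul', ← norm_pow, invSqrtSeries_sq hz, norm_inv, inv_pow]

noncomputable def kernelTerm (t : ℝ) (k : ℕ) (θ : ℝ) : ℝ :=
  t ^ k * ∑ p ∈ antidiagonal k,
    invSqrtCoeff p.1 * invSqrtCoeff p.2 * Real.cos (((p.1 : ℝ) - p.2) * θ)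

lemma norm_one_sub_ofReal_mul_exp (t θ : ℝ) :
    ‖1 - t * exp (θ * I)‖ = √(1 - 2 * t * Real.cos θ + t ^ 2) := by
  have h : 1 - t * exp (θ * I) = (1 - t * Real.cos θ : ℝ) + (-t * Real.sin θ : ℝ) * I := by
    rw [exp_mul_I, ← ofReal_cos, ← ofReal_sin]
    push_cast
    ring
  rw [Complex.norm_def, h, normSq_add_mul_I]
  congr 1
  linear_combination t ^ 2 * Real.sin_sq_add_cos_sq θ

lemma re_pow_mul_conj_pow (t θ : ℝ) (i j : ℕ) :
    ((t * exp (θ * I)) ^ i * conj (t * exp (θ * I)) ^ j).re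
      = t ^ (i + j) * Real.cos (((i : ℝ) - j) * θ) := by
  have hconj : conj (t * exp (θ * I)) = t * exp (-θ * I) := by
    rw [map_mul, conj_ofReal, ← exp_conj]
    simp
  have hexp : exp (i * (θ * I)) * exp (j * (-θ * I)) = exp (((((i : ℝ) - j) * θ : ℝ)) * I) := by
    rw [← exp_add]
    push_cast
    ring_nf
  rw [hconj, mul_pow, mul_pow, ← exp_nat_mul, ← exp_nat_mul, mul_mul_mul_comm, ← pow_add,
    hexp, ← ofReal_pow, re_ofReal_mul, exp_ofReal_mul_I_re]

lemma hasSum_kernelTerm {t : ℝ} (ht : |t| < 1) (θ : ℝ) :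
    HasSum (fun k => kernelTerm t k θ) (√(1 - 2 * t * Real.cos θ + t ^ 2))⁻¹ := by
  set z : ℂ := t * exp (θ * I)
  have hz : ‖z‖ < 1 := by simpa [z, norm_exp_ofReal_mul_I] using ht
  have h := Complex.hasSum_re (hasSum_invSqrtSeries_mul hz (by rwa [RCLike.norm_conj]))
  rw [← conj_invSqrtSeries, mul_conj, normSq_eq_norm_sq, ofReal_re,
    norm_invSqrtSeries_sq hz, norm_one_sub_ofReal_mul_exp] at h
  convert h using 1
  funext k
  rw [kernelTerm, re_sum, mul_sum]
  refine sum_congr rfl fun p hp => ?_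
  rw [mul_mul_mul_comm, ← ofReal_mul, re_ofReal_mul, re_pow_mul_conj_pow, mem_antidiagonal.mp hp]
  ring

lemma abs_kernelTerm_le (t : ℝ) (k : ℕ) (θ : ℝ) : |kernelTerm t k θ| ≤ |t| ^ k := by
  rw [kernelTerm, abs_mul, abs_pow]
  refine mul_le_of_le_one_right (by positivity) ?_
  calc _ ≤ ∑ p ∈ antidiagonal k,
          |invSqrtCoeff p.1 * invSqrtCoeff p.2 * Real.cos (((p.1 : ℝ) - p.2) * θ)| :=
        abs_sum_le_sum_abs _ _
    _ ≤ ∑ p ∈ antidiagonal k, invSqrtCoeff p.1 * invSqrtCoeff p.2 := by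
        refine sum_le_sum fun p _ => ?_
        have hpos := mul_pos (invSqrtCoeff_pos p.1) (invSqrtCoeff_pos p.2)
        rw [abs_mul, abs_of_pos hpos]
        exact mul_le_of_le_one_right hpos.le (Real.abs_cos_le_one _)
    _ = 1 := sum_antidiagonal_invSqrtCoeff_mul k

lemma continuous_kernelTerm (t : ℝ) (k : ℕ) : Continuous (kernelTerm t k) := by
  unfold kernelTerm
  fun_prop

lemma integral_cos_int_mul (m : ℤ) :
    ∫ θ in (0 : ℝ)..π, Real.cos (m * θ) = if m = 0 then π else 0 := by
  split_ifs with hm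
  · simp [hm]
  · rw [intervalIntegral.integral_comp_mul_left Real.cos (Int.cast_ne_zero.mpr hm)]
    simp [Real.sin_int_mul_pi]

lemma integral_cos_int_mul_mul_cos (m n : ℤ) :
    ∫ θ in (0 : ℝ)..π, Real.cos (m * θ) * Real.cos (n * θ)
      = π / 2 * ((if m = n then 1 else 0) + if m = -n then 1 else 0) := by
  have hprod : ∀ θ : ℝ, Real.cos (m * θ) * Real.cos (n * θ)
      = (Real.cos (((m - n : ℤ) : ℝ) * θ) + Real.cos (((m + n : ℤ) : ℝ) * θ)) / 2 := fun θ => by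
    push_cast
    rw [sub_mul, add_mul, Real.cos_sub, Real.cos_add]
    ring
  have hint : ∀ c : ℤ, IntervalIntegrable (fun θ => Real.cos (c * θ)) MeasureTheory.volume 0 π :=
    fun c => (by fun_prop : Continuous fun θ : ℝ => Real.cos (c * θ)).intervalIntegrable 0 π
  simp_rw [hprod, intervalIntegral.integral_div, intervalIntegral.integral_add (hint _) (hint _),
    integral_cos_int_mul, sub_eq_zero, add_eq_zero_iff_eq_neg]
  split_ifs <;> ring

lemma integral_cos_mul_kernelTerm (n k : ℕ) (t : ℝ) :
    ∫ θ in (0 : ℝ)..π, Real.cos (n * θ) * kernelTerm t k θ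
      = π * t ^ k * ∑ p ∈ antidiagonal k,
          if (p.1 : ℤ) - p.2 = n then invSqrtCoeff p.1 * invSqrtCoeff p.2 else 0 := by
  have hpt : ∀ θ, Real.cos (n * θ) * kernelTerm t k θ = t ^ k * ∑ p ∈ antidiagonal k,
      invSqrtCoeff p.1 * invSqrtCoeff p.2 * (Real.cos (((p.1 : ℝ) - p.2) * θ) * Real.cos (n * θ)) :=
    fun θ => by
      rw [kernelTerm, mul_left_comm, mul_sum]
      exact congrArg _ (sum_congr rfl fun _ _ => by ring)
  have hterm : ∀ p : ℕ × ℕ, invSqrtCoeff p.1 * invSqrtCoeff p.2 *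
      ∫ θ in (0 : ℝ)..π, Real.cos (((p.1 : ℝ) - p.2) * θ) * Real.cos (n * θ)
      = π / 2 * ((if (p.1 : ℤ) - p.2 = n then invSqrtCoeff p.1 * invSqrtCoeff p.2 else 0)
          + if (p.2 : ℤ) - p.1 = n then invSqrtCoeff p.1 * invSqrtCoeff p.2 else 0) := fun p => by
    have hcast : ((p.1 : ℝ) - p.2) = (((p.1 : ℤ) - p.2 : ℤ) : ℝ) := by push_cast; rfl
    rw [hcast, ← Int.cast_natCast n, integral_cos_int_mul_mul_cos]
    have hneg : (p.1 : ℤ) - p.2 = -n ↔ (p.2 : ℤ) - p.1 = n := by omega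
    simp only [hneg]
    split_ifs <;> ring
  have hswap : ∑ p ∈ antidiagonal k,
        (if (p.2 : ℤ) - p.1 = n then invSqrtCoeff p.1 * invSqrtCoeff p.2 else 0)
      = ∑ p ∈ antidiagonal k,
        (if (p.1 : ℤ) - p.2 = n then invSqrtCoeff p.1 * invSqrtCoeff p.2 else 0) := by
    rw [← sum_antidiagonal_swap]
    exact sum_congr rfl fun p _ => by rw [Prod.fst_swap, Prod.snd_swap, mul_comm]
  simp_rw [hpt, intervalIntegral.integral_const_mul]
  rw [intervalIntegral.integral_finsetSum fun p _ =>
    (by fun_prop : Continuous _).intervalIntegrable _ _]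
  simp only [intervalIntegral.integral_const_mul, hterm, ← mul_sum, sum_add_distrib, hswap]
  ring

lemma betaCoef_nonneg (n k : ℕ) : 0 ≤ betaCoef n k := by
  unfold betaCoef
  split_ifs <;> positivity

lemma betaCoef_eq_sum (n k : ℕ) :
    betaCoef n k = (if n = 0 then 1 else 2) * ∑ p ∈ antidiagonal k,
      if (p.1 : ℤ) - p.2 = n then invSqrtCoeff p.1 * invSqrtCoeff p.2 else 0 := by
  by_cases h : n ≤ k ∧ k % 2 = n % 2
  · rw [betaCoef, if_pos h, sum_eq_single ((k + n) / 2, (k - n) / 2)]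
    · rw [if_pos (show (((k + n) / 2 : ℕ) : ℤ) - ((k - n) / 2 : ℕ) = n by omega),
        invSqrtCoeff_eq_choose, invSqrtCoeff_eq_choose, show 2 * ((k + n) / 2) = k + n by omega,
        show 2 * ((k - n) / 2) = k - n by omega,
        div_mul_div_comm, ← pow_add, show k + n + (k - n) = 2 * k by omega]
      ring
    · intro p hp hne
      have := mem_antidiagonal.mp hp
      exact if_neg fun hp' => hne (Prod.ext (by omega) (by omega))
    · exact fun hq => (hq (mem_antidiagonal.mpr (by omega))).elim
  · rw [betaCoef, if_neg h, sum_eq_zero, mul_zero]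
    intro p hp
    have := mem_antidiagonal.mp hp
    exact if_neg (by omega)

lemma betaCoef_pos {n k : ℕ} (hnk : n ≤ k) (hpar : k % 2 = n % 2) : 0 < betaCoef n k := by
  rw [betaCoef, if_pos ⟨hnk, hpar⟩]
  have h₁ := Nat.choose_pos (Nat.div_le_self (k + n) 2)
  have h₂ := Nat.choose_pos (Nat.div_le_self (k - n) 2)
  split_ifs <;> positivity

lemma hasSum_integral_cos_mul_kernelTerm (n : ℕ) {t : ℝ} (ht : |t| < 1) :
    HasSum (fun k => ∫ θ in (0 : ℝ)..π, Real.cos (n * θ) * kernelTerm t k θ)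
      (∫ θ in (0 : ℝ)..π, Real.cos (n * θ) / √(1 - 2 * t * Real.cos θ + t ^ 2)) := by
  refine intervalIntegral.hasSum_integral_of_dominated_convergence (fun k _ => |t| ^ k)
    (fun k => ?_) (fun k => .of_forall fun θ _ => ?_)
    (.of_forall fun _ _ => summable_geometric_of_lt_one (abs_nonneg t) ht)
    intervalIntegrable_const (.of_forall fun θ _ => ?_)
  · have := continuous_kernelTerm t k
    exact (by fun_prop : Continuous fun θ => Real.cos (n * θ) * kernelTerm t k θ)
      |>.aestronglyMeasurable
  · rw [norm_mul, Real.norm_eq_abs, Real.norm_eq_abs]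
    exact (mul_le_of_le_one_left (abs_nonneg _) (Real.abs_cos_le_one _)).trans
      (abs_kernelTerm_le t k θ)
  · simpa only [div_eq_mul_inv] using (hasSum_kernelTerm ht θ).mul_left (Real.cos (n * θ))

theorem fourier_cosine_coeffs_positive (n : ℕ) (t : ℝ) (ht : t ∈ Set.Ioo (0:ℝ) 1) :
    (∀ k : ℕ, n ≤ k → k % 2 = n % 2 → 0 < betaCoef n k) ∧
    ((if n = 0 then (1:ℝ) else 2) / Real.pi) *
        (∫ θ in (0:ℝ)..Real.pi,
          Real.cos (n * θ) / Real.sqrt (1 - 2 * t * Real.cos θ + t ^ 2))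
      = ∑' k : ℕ, betaCoef n k * t ^ k ∧
    0 < ((if n = 0 then (1:ℝ) else 2) / Real.pi) *
        ∫ θ in (0:ℝ)..Real.pi,
          Real.cos (n * θ) / Real.sqrt (1 - 2 * t * Real.cos θ + t ^ 2) := by
  have hcoeff : ∀ k, ((if n = 0 then (1:ℝ) else 2) / π) *
      (∫ θ in (0 : ℝ)..π, Real.cos (n * θ) * kernelTerm t k θ) = betaCoef n k * t ^ k := by
    intro k
    rw [integral_cos_mul_kernelTerm, betaCoef_eq_sum]
    field_simp
  have hsum : HasSum (fun k => betaCoef n k * t ^ k) (((if n = 0 then (1:ℝ) else 2) / π) *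
      ∫ θ in (0 : ℝ)..π, Real.cos (n * θ) / √(1 - 2 * t * Real.cos θ + t ^ 2)) := by
    simpa only [hcoeff] using (hasSum_integral_cos_mul_kernelTerm n
      (abs_lt.mpr ⟨by linarith [ht.1], ht.2⟩)).mul_left ((if n = 0 then (1:ℝ) else 2) / π)
  refine ⟨fun k => betaCoef_pos, hsum.tsum_eq.symm, hsum.tsum_eq ▸ ?_⟩
  exact hsum.summable.tsum_pos
    (fun k => mul_nonneg (betaCoef_nonneg n k) (pow_nonneg ht.1.le k)) n
    (mul_pos (betaCoef_pos le_rfl rfl) (pow_pos ht.1 n))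
end

section
/- Let v_n(r, r', Z) = 2∫₀^π V(r,r',Z,θ) cos(nθ) dθ (up to normalization) where V(r,r',Z,θ) = (K + 2a²rr'(1 − cosθ))^{-1/2} with K = K(r,r',Z) > 0 whenever (r,Z) ≠ (r',0) and a > 0, which is the cylindrical-coordinate representation of x ↦ 1/|(1−S)^{-1}x| for S = diag(s₁,s₁,s₃). Then v_n(r, r', Z) > 0 for all n ≥ 0, r, r' > 0 and Z ∈ ℝ. -/
/-!
Put `B = 2a²rr'` and `t = B / (K + B) ∈ (0, 1)`. Then `K + B (1 - cos θ) = (K + B)(1 - t cos θ)`,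
and the binomial series of `(1 - x)^(-1/2)`, whose coefficients are all positive, expands the
integrand as `cos (nθ) · ∑ₖ cₖ cos θ ^ k` with `cₖ > 0`. Every moment
`∫₀^π cos θ ^ k cos (mθ) dθ` with `m ∈ ℤ` is nonnegative, by induction on `k` through
`2 cos θ cos (mθ) = cos ((m+1)θ) + cos ((m-1)θ)`, and the one with `k = m = n` is positive.
Integrating term by term, the coefficient is at least its positive `k = n` term.
-/

open Real intervalIntegral

lemma Ring.multichoose_pos {R : Type*} [CommRing R] [LinearOrder R] [IsStrictOrderedRing R]
    [BinomialRing R] {r : R} (hr : 0 < r) (n : ℕ) : 0 < Ring.multichoose r n := by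
  have h := Ring.factorial_nsmul_multichoose_eq_ascPochhammer r n
  rw [Polynomial.ascPochhammer_smeval_eq_eval, nsmul_eq_mul] at h
  have := ascPochhammer_pos n r hr
  rw [← h] at this
  exact pos_of_mul_pos_right this (by positivity)

lemma hasSum_multichoose_half_mul_pow {x : ℝ} (hx : |x| < 1) :
    HasSum (fun k ↦ Ring.multichoose (1 / 2 : ℝ) k * x ^ k) (√(1 - x))⁻¹ := by
  have h := (one_div_one_sub_rpow_hasFPowerSeriesOnBall_zero (1 / 2)).hasSum
    (y := x) (by simpa [enorm_eq_nnnorm, ← NNReal.coe_lt_one] using hx)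
  simp only [FormalMultilinearSeries.ofScalars_apply_eq, zero_add, smul_eq_mul] at h
  simpa [Ring.multichoose_eq, sqrt_eq_rpow] using h

lemma inv_sqrt_one_sub_mul_cos_eq_tsum {t : ℝ} (ht : |t| < 1) (θ : ℝ) :
    (√(1 - t * cos θ))⁻¹ = ∑' k, Ring.multichoose (1 / 2 : ℝ) k * t ^ k * cos θ ^ k := by
  have hx : |t * cos θ| < 1 := by
    rw [abs_mul]
    exact (mul_le_of_le_one_right (abs_nonneg t) (abs_cos_le_one θ)).trans_lt ht
  simp_rw [mul_assoc, ← mul_pow]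
  exact (hasSum_multichoose_half_mul_pow hx).tsum_eq.symm

lemma integral_cos_int_mul_nonneg (m : ℤ) : 0 ≤ ∫ θ in 0..π, cos (m * θ) := by
  rcases eq_or_ne m 0 with rfl | hm
  · simpa using pi_pos.le
  · have hm' : (m : ℝ) ≠ 0 := Int.cast_ne_zero.mpr hm
    rw [integral_comp_mul_left (fun θ ↦ cos θ) hm', integral_cos, sin_int_mul_pi]
    simp

lemma cos_pow_succ_mul_cos (k : ℕ) (m θ : ℝ) :
    cos θ ^ (k + 1) * cos (m * θ) =
      (cos θ ^ k * cos ((m + 1) * θ) + cos θ ^ k * cos ((m - 1) * θ)) / 2 := by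
  rw [add_mul, sub_mul, one_mul, cos_add, cos_sub]
  ring

lemma integral_cos_pow_succ_mul_cos (k : ℕ) (m : ℝ) :
    ∫ θ in 0..π, cos θ ^ (k + 1) * cos (m * θ) =
      ((∫ θ in 0..π, cos θ ^ k * cos ((m + 1) * θ)) +
        ∫ θ in 0..π, cos θ ^ k * cos ((m - 1) * θ)) / 2 := by
  simp_rw [cos_pow_succ_mul_cos]
  rw [integral_div, integral_add ((by fun_prop : Continuous _).intervalIntegrable _ _)
    ((by fun_prop : Continuous _).intervalIntegrable _ _)]

lemma integral_cos_pow_mul_cos_int_mul_nonneg (k : ℕ) (m : ℤ) :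
    0 ≤ ∫ θ in 0..π, cos θ ^ k * cos (m * θ) := by
  induction k generalizing m with
  | zero => simpa using integral_cos_int_mul_nonneg m
  | succ k ih =>
    have hup := ih (m + 1)
    have hdown := ih (m - 1)
    push_cast at hup hdown
    rw [integral_cos_pow_succ_mul_cos]
    linarith

lemma integral_cos_pow_mul_cos_self_pos (n : ℕ) :
    0 < ∫ θ in 0..π, cos θ ^ n * cos (n * θ) := by
  induction n with
  | zero => simpa using pi_pos
  | succ n ih =>
    have hup := integral_cos_pow_mul_cos_int_mul_nonneg n (n + 2)
    rw [integral_cos_pow_succ_mul_cos]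
    push_cast at hup ⊢
    rw [add_sub_cancel_right, add_assoc, one_add_one_eq_two]
    linarith

theorem integral_cos_mul_tsum_mul_cos_pow_pos {c : ℕ → ℝ} (hc : ∀ k, 0 ≤ c k)
    (hsum : Summable c) {n : ℕ} (hn : 0 < c n) :
    0 < ∫ θ in 0..π, cos (n * θ) * ∑' k, c k * cos θ ^ k := by
  have hbound : ∀ k θ, ‖c k * cos θ ^ k‖ ≤ c k := fun k θ ↦ by
    rw [norm_mul, norm_of_nonneg (hc k), norm_pow]
    exact mul_le_of_le_one_right (hc k) (pow_le_one₀ (norm_nonneg _) (abs_cos_le_one θ))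
  have hswap : HasSum (fun k ↦ ∫ θ in 0..π, cos (n * θ) * (c k * cos θ ^ k))
      (∫ θ in 0..π, cos (n * θ) * ∑' k, c k * cos θ ^ k) := by
    apply hasSum_integral_of_dominated_convergence (fun k _ ↦ c k)
    · exact fun k ↦ (by fun_prop : Continuous _).aestronglyMeasurable
    · refine fun k ↦ .of_forall fun θ _ ↦ (norm_mul_le _ _).trans ?_
      exact (mul_le_of_le_one_left (norm_nonneg _) (abs_cos_le_one _)).trans (hbound k θ)
    · exact .of_forall fun _ _ ↦ hsum
    · exact intervalIntegrable_const
    · exact .of_forall fun θ _ ↦ (hsum.of_norm_bounded (hbound · θ)).hasSum.mul_left _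
  have hterm : ∀ k, ∫ θ in 0..π, cos (n * θ) * (c k * cos θ ^ k) =
      c k * ∫ θ in 0..π, cos θ ^ k * cos (n * θ) := fun k ↦ by
    rw [← integral_const_mul]
    congr 1 with θ
    ring
  simp_rw [hterm] at hswap
  rw [← hswap.tsum_eq]
  refine hswap.summable.tsum_pos (fun k ↦ ?_) n
    (mul_pos hn (integral_cos_pow_mul_cos_self_pos n))
  exact mul_nonneg (hc k) (by exact_mod_cast integral_cos_pow_mul_cos_int_mul_nonneg k n)

theorem cylindrical_fourier_coeff_positive (a : ℝ) (ha : 0 < a)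
    (K : ℝ) (hK : 0 < K) (n : ℕ) (r r' : ℝ) (hr : 0 < r) (hr' : 0 < r') :
    0 < 2 * ∫ θ in (0:ℝ)..Real.pi,
        Real.cos (n * θ) / Real.sqrt (K + 2 * a ^ 2 * r * r' * (1 - Real.cos θ)) := by
  set B := 2 * a ^ 2 * r * r'
  have hB : 0 < B := by positivity
  set t := B / (K + B)
  have htB : t * (K + B) = B := div_mul_cancel₀ B (by positivity)
  have ht₀ : 0 < t := by positivity
  have ht : |t| < 1 := by
    rw [abs_of_pos ht₀, div_lt_one (by positivity)]
    linarith
  set c : ℕ → ℝ := fun k ↦ Ring.multichoose (1 / 2 : ℝ) k * t ^ k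
  have hc : ∀ k, 0 < c k := fun k ↦ mul_pos (Ring.multichoose_pos one_half_pos k) (pow_pos ht₀ k)
  have hsum : Summable c := (hasSum_multichoose_half_mul_pow ht).summable
  have hintegrand : ∀ θ, cos (n * θ) / √(K + B * (1 - cos θ)) =
      (√(K + B))⁻¹ * (cos (n * θ) * ∑' k, c k * cos θ ^ k) := fun θ ↦ by
    have hfactor : K + B * (1 - cos θ) = (K + B) * (1 - t * cos θ) := by
      linear_combination cos θ * htB
    rw [← inv_sqrt_one_sub_mul_cos_eq_tsum ht, hfactor, sqrt_mul (by positivity),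
      div_eq_mul_inv, mul_inv]
    ring
  simp_rw [hintegrand, integral_const_mul]
  have := integral_cos_mul_tsum_mul_cos_pow_pos (fun k ↦ (hc k).le) hsum (hc n)
  positivity
end

section
/- Let n ≥ 2 and let g : [0,π] → ℝ be positive and strictly decreasing. Then T_n := ∫₀^π g(θ)(cos(nθ) − cosθ) dθ < 0. -/
/-!
With `F t = ∫ x in a..t, f x`, which is negative on `(a, b)` and vanishes at `a` and `b`, the
integral of `g * f` for antitone `g` is a continuous Abel summation: writing `g θ - g b` as the
layer-cake integral of `1[s < g θ]` over levels `s ∈ [g b, g a]` and applying Fubini, it becomes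
the integral over `s` of `F (t s)`, where `{θ | s < g θ}` is `[a, t s)` or `[a, t s]`. Every
`F (t s)` is `≤ 0`, and strict monotonicity of `g` gives a set of levels of positive measure
with `t s` interior, where `F (t s) < 0`. For `f θ = cos (n θ) - cos θ` on `[0, π]` one has
`F t = sin (n t) / n - sin t`, negative on `(0, π)` since `|sin (n t)| < n sin t` for `n ≥ 2`.
-/

open Real MeasureTheory Set

theorem setIntegral_neg_of_nonpos_of_neg_on {α : Type*} [MeasurableSpace α] {μ : Measure α}
    {φ : α → ℝ} {S J : Set α} (hS : MeasurableSet S) (hφ : IntegrableOn φ S μ)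
    (hnonpos : ∀ x ∈ S, φ x ≤ 0) (hJS : J ⊆ S) (hJ : 0 < μ J) (hneg : ∀ x ∈ J, φ x < 0) :
    ∫ x in S, φ x ∂μ < 0 := by
  have hpos : 0 < ∫ x in S, -φ x ∂μ := by
    rw [setIntegral_pos_iff_support_of_nonneg_ae (f := fun x => -φ x) _ hφ.neg]
    · exact hJ.trans_le (measure_mono fun x hx => ⟨(neg_pos.mpr (hneg x hx)).ne', hJS hx⟩)
    · filter_upwards [ae_restrict_mem hS] with x hx using neg_nonneg.mpr (hnonpos x hx)
  rwa [integral_neg, neg_pos] at hpos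

theorem IsLowerSet.exists_Ico_subset_inter_Icc_subset_Icc {α : Type*}
    [ConditionallyCompleteLinearOrder α] {L : Set α} (hL : IsLowerSet L) {a b : α} (hab : a ≤ b) :
    ∃ t ∈ Icc a b, Ico a t ⊆ Icc a b ∩ L ∧ Icc a b ∩ L ⊆ Icc a t := by
  set A := insert a (Icc a b ∩ L)
  have hA : BddAbove A := ⟨b, by rintro x (rfl | hx); exacts [hab, hx.1.2]⟩
  have hAne : A.Nonempty := ⟨a, mem_insert a _⟩
  refine ⟨sSup A, ⟨le_csSup hA (mem_insert a _), csSup_le hAne ?_⟩, ?_, ?_⟩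
  · rintro x (rfl | hx); exacts [hab, hx.1.2]
  · rintro θ ⟨haθ, hθt⟩
    obtain ⟨x, hxA, hθx⟩ := exists_lt_of_lt_csSup hAne hθt
    rcases hxA with rfl | ⟨hx, hxL⟩
    · exact absurd haθ (not_le.mpr hθx)
    · exact ⟨⟨haθ, hθx.le.trans hx.2⟩, hL hθx.le hxL⟩
  · exact fun x hx => ⟨hx.1.1, le_csSup hA (mem_insert_of_mem a hx)⟩

theorem setIntegral_eq_intervalIntegral_of_Ico_subset_of_subset_Icc {f : ℝ → ℝ} {S : Set ℝ}
    {a t : ℝ} (hat : a ≤ t) (hIco : Ico a t ⊆ S) (hIcc : S ⊆ Icc a t) :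
    ∫ x in S, f x = ∫ x in a..t, f x := by
  have hS : S =ᵐ[volume] Icc a t :=
    (LE.le.eventuallyLE hIcc).antisymm (Ico_ae_eq_Icc.symm.le.trans (LE.le.eventuallyLE hIco))
  rw [setIntegral_congr_set hS, integral_Icc_eq_integral_Ioc, intervalIntegral.integral_of_le hat]

theorem setIntegral_Icc_indicator_Iio_const {c d x : ℝ} (hcx : c ≤ x) (hxd : x ≤ d) (y : ℝ) :
    ∫ s in Icc c d, (Iio x).indicator (fun _ => y) s = (x - c) * y := by
  have hIco : Icc c d ∩ Iio x = Ico c x := by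
    ext s; simp only [mem_inter_iff, mem_Icc, mem_Iio, mem_Ico]
    exact ⟨fun h => ⟨h.1.1, h.2⟩, fun h => ⟨⟨h.1, h.2.le.trans hxd⟩, h.2⟩⟩
  rw [setIntegral_indicator measurableSet_Iio, hIco, setIntegral_const, volume_real_Ico_of_le hcx,
    smul_eq_mul]

theorem integrable_indicator_lt_comp_fst {α : Type*} [MeasurableSpace α] {μ : Measure α}
    {ν : Measure ℝ} [IsFiniteMeasure ν] {f H : α → ℝ} (hf : Integrable f μ) (hH : Measurable H) :
    Integrable ({p : α × ℝ | p.2 < H p.1}.indicator fun p => f p.1) (μ.prod ν) :=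
  (hf.norm.comp_fst ν).mono' (hf.aestronglyMeasurable.comp_fst.indicator
    (measurableSet_lt measurable_snd (hH.comp measurable_fst)))
    (ae_of_all _ fun _ => norm_indicator_le_norm_self _ _)

theorem intervalIntegral_antitone_mul_eq_integral_integral_indicator {f H : ℝ → ℝ} {a b : ℝ}
    (hab : a ≤ b) (hf : IntegrableOn f (Icc a b)) (hFb : ∫ x in a..b, f x = 0)
    (hH : Antitone H) :
    ∫ x in a..b, H x * f x =
      ∫ s in Icc (H b) (H a), ∫ θ in Icc a b, {θ | s < H θ}.indicator f θ := by
  set μ := volume.restrict (Icc a b)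
  set ν := volume.restrict (Icc (H b) (H a))
  set G : ℝ × ℝ → ℝ := {p | p.2 < H p.1}.indicator fun p => f p.1
  have hGint : Integrable G (μ.prod ν) := integrable_indicator_lt_comp_fst hf hH.measurable
  have hlayer : ∀ θ ∈ Icc a b, ∫ s, G (θ, s) ∂ν = (H θ - H b) * f θ := fun θ hθ =>
    setIntegral_Icc_indicator_Iio_const (hH hθ.2) (hH hθ.1) (f θ)
  have hint : Integrable (fun θ => (H θ - H b) * f θ) μ :=
    hGint.integral_prod_left.congr (ae_restrict_of_forall_mem measurableSet_Icc hlayer)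
  have hf0 : ∫ θ, f θ ∂μ = 0 := by
    rw [integral_Icc_eq_integral_Ioc, ← intervalIntegral.integral_of_le hab, hFb]
  calc ∫ x in a..b, H x * f x
      = ∫ θ, ((H θ - H b) * f θ + H b * f θ) ∂μ := by
        rw [intervalIntegral.integral_of_le hab, ← integral_Icc_eq_integral_Ioc]
        congr 1; ext θ; ring
    _ = ∫ θ, (H θ - H b) * f θ ∂μ := by
        rw [integral_add hint (hf.const_mul _), integral_const_mul, hf0, mul_zero, add_zero]
    _ = ∫ θ, ∫ s, G (θ, s) ∂ν ∂μ :=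
        (setIntegral_congr_fun measurableSet_Icc fun θ hθ => hlayer θ hθ).symm
    _ = ∫ s, ∫ θ, G (θ, s) ∂μ ∂ν := integral_integral_swap hGint

theorem intervalIntegral_antitone_mul_neg {f H : ℝ → ℝ} {a b c d : ℝ} (hac : a < c)
    (hcd : c < d) (hdb : d < b) (hf : IntegrableOn f (Icc a b))
    (hF : ∀ t ∈ Ioo a b, ∫ x in a..t, f x < 0) (hFb : ∫ x in a..b, f x = 0)
    (hH : Antitone H) (hHcd : H d < H c) :
    ∫ x in a..b, H x * f x < 0 := by
  have hab : a ≤ b := (hac.trans (hcd.trans hdb)).le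
  have hlevel : ∀ s, ∃ t ∈ Icc a b, Ico a t ⊆ Icc a b ∩ {θ | s < H θ} ∧
      Icc a b ∩ {θ | s < H θ} ⊆ Icc a t ∧
      ∫ θ in Icc a b, {θ | s < H θ}.indicator f θ = ∫ x in a..t, f x := by
    intro s
    have hL : IsLowerSet {θ | s < H θ} := fun _ _ hyx hx => lt_of_lt_of_le hx (hH hyx)
    obtain ⟨t, ht, hIco, hIcc⟩ := hL.exists_Ico_subset_inter_Icc_subset_Icc hab
    refine ⟨t, ht, hIco, hIcc, ?_⟩
    rw [setIntegral_indicator (measurableSet_lt measurable_const hH.measurable),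
      setIntegral_eq_intervalIntegral_of_Ico_subset_of_subset_Icc ht.1 hIco hIcc]
  rw [intervalIntegral_antitone_mul_eq_integral_integral_indicator hab hf hFb hH]
  refine setIntegral_neg_of_nonpos_of_neg_on (J := Ioo (H d) (H c)) measurableSet_Icc
    (integrable_indicator_lt_comp_fst hf hH.measurable).integral_prod_right (fun s _ => ?_)
    (fun s hs => ⟨(hH hdb.le).trans hs.1.le, hs.2.le.trans (hH hac.le)⟩)
    (by simpa [Real.volume_Ioo] using hHcd) (fun s hs => ?_)
  · obtain ⟨t, ⟨hat, htb⟩, -, -, hφ⟩ := hlevel s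
    rw [hφ]
    rcases hat.eq_or_lt with rfl | hat
    · simp
    rcases htb.eq_or_lt with rfl | htb
    · exact hFb.le
    exact (hF t ⟨hat, htb⟩).le
  · obtain ⟨t, ht, hIco, hIcc, hφ⟩ := hlevel s
    have hct : c ≤ t := (hIcc ⟨⟨hac.le, (hcd.trans hdb).le⟩, hs.2⟩).2
    have htd : t ≤ d := not_lt.mp fun hdt => hs.1.not_gt (hIco ⟨(hac.trans hcd).le, hdt⟩).2
    exact hφ ▸ hF t ⟨hac.trans_le hct, htd.trans_lt hdb⟩

theorem intervalIntegral_strictAntiOn_mul_neg {f g : ℝ → ℝ} {a b : ℝ} (hab : a < b)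
    (hf : IntegrableOn f (Icc a b)) (hF : ∀ t ∈ Ioo a b, ∫ x in a..t, f x < 0)
    (hFb : ∫ x in a..b, f x = 0) (hg : StrictAntiOn g (Icc a b)) :
    ∫ x in a..b, g x * f x < 0 := by
  obtain ⟨c, hac, hcb⟩ := exists_between hab
  obtain ⟨d, hcd, hdb⟩ := exists_between hcb
  set H : ℝ → ℝ := fun x => g (projIcc a b hab.le x)
  have hH : Antitone H := fun x y hxy =>
    hg.antitoneOn (projIcc a b hab.le x).2 (projIcc a b hab.le y).2 (monotone_projIcc hab.le hxy)
  have hgH : ∀ x ∈ Icc a b, g x = H x := fun x hx => by simp only [H, projIcc_of_mem _ hx]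
  have hHcd : H d < H c := by
    rw [← hgH c ⟨hac.le, hcb.le⟩, ← hgH d ⟨(hac.trans hcd).le, hdb.le⟩]
    exact hg ⟨hac.le, hcb.le⟩ ⟨(hac.trans hcd).le, hdb.le⟩ hcd
  rw [intervalIntegral.integral_congr fun x hx => by rw [hgH x (uIcc_of_le hab.le ▸ hx)]]
  exact intervalIntegral_antitone_mul_neg hac hcd hdb hf hF hFb hH hHcd

theorem integral_cos_mul_sub_cos {r : ℝ} (hr : r ≠ 0) (t : ℝ) :
    ∫ θ in (0:ℝ)..t, (cos (r * θ) - cos θ) = sin (r * t) / r - sin t := by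
  rw [intervalIntegral.integral_sub, intervalIntegral.integral_comp_mul_left _ hr, integral_cos,
    integral_cos]
  · simp [div_eq_inv_mul]
  · exact (continuous_cos.comp (continuous_const_mul r)).intervalIntegrable _ _
  · exact continuous_cos.intervalIntegrable _ _

theorem abs_sin_nat_mul_lt {n : ℕ} (hn : 2 ≤ n) {t : ℝ} (h0 : 0 < t) (hπ : t < π) :
    |sin (n * t)| < n * sin t := by
  have hsin : 0 < sin t := sin_pos_of_pos_of_lt_pi h0 hπ
  have hcos : |cos t| < 1 := by
    rw [← sq_lt_one_iff_abs_lt_one]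
    nlinarith [sin_sq_add_cos_sq t]
  induction n, hn using Nat.le_induction with
  | base =>
    rw [Nat.cast_two, sin_two_mul, abs_mul, abs_mul, abs_of_pos hsin, abs_two]
    nlinarith
  | succ m _ ih =>
    calc |sin ((m + 1 : ℕ) * t)| = |sin (m * t) * cos t + cos (m * t) * sin t| := by
          push_cast; rw [add_mul, one_mul, sin_add]
      _ ≤ |sin (m * t)| * |cos t| + |cos (m * t)| * sin t := by
          refine (abs_add_le _ _).trans_eq ?_
          rw [abs_mul, abs_mul, abs_of_pos hsin]
      _ < m * sin t + sin t := by
          nlinarith [abs_nonneg (sin (m * t)), abs_cos_le_one (m * t), abs_nonneg (cos t)]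
      _ = (m + 1 : ℕ) * sin t := by push_cast; ring

theorem integral_cos_diff_neg_general (n : ℕ) (hn : 2 ≤ n) (g : ℝ → ℝ)
    (hgdec : StrictAntiOn g (Set.Icc (0:ℝ) Real.pi)) :
    (∫ θ in (0:ℝ)..Real.pi, g θ * (Real.cos (n * θ) - Real.cos θ)) < 0 := by
  have hn0 : (0 : ℝ) < n := by positivity
  refine intervalIntegral_strictAntiOn_mul_neg pi_pos ?_ (fun t ht => ?_) ?_ hgdec
  · exact ((continuous_cos.comp (continuous_const_mul _)).sub continuous_cos).integrableOn_Icc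
  · rw [integral_cos_mul_sub_cos hn0.ne', sub_neg, div_lt_iff₀' hn0]
    exact (le_abs_self _).trans_lt (abs_sin_nat_mul_lt hn ht.1 ht.2)
  · rw [integral_cos_mul_sub_cos hn0.ne', sin_nat_mul_pi, sin_pi, zero_div, sub_zero]

theorem integral_cos_diff_neg (n : ℕ) (hn : 2 ≤ n) (g : ℝ → ℝ)
    (hgpos : ∀ θ ∈ Set.Icc (0:ℝ) Real.pi, 0 < g θ)
    (hgdec : StrictAntiOn g (Set.Icc (0:ℝ) Real.pi)) :
    (∫ θ in (0:ℝ)..Real.pi, g θ * (Real.cos (n * θ) - Real.cos θ)) < 0 :=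
  integral_cos_diff_neg_general n hn g hgdec
end
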